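/- arXiv:2201.13281 — 2 statements merged into one kernel-verified Lean document; each statement's English description precedes it below -/
import Mathlib

section
/- Let d ≥ 1, s ∈ (0,1), and O ⊂ ℝ^d be open. Suppose u ∈ H^s(ℝ^d) (i.e. u ∈ L²(ℝ^d) and |u|_{H^s} < ∞) satisfies (−Δ)^s u + u ≤ 0 weakly in O, i.e. ⟨u,h⟩_{H^s} ≤ −∫_{ℝ^d} u h for all h ∈ H^s_0(Ō) with h ≥ 0, and that u ≤ 0 almost everywhere on ℝ^d ∖ O. Then u ≤ 0 almost everywhere on ℝ^d. -/
/-! Test the weak inequality with `h = 1_O · u⁺`, which equals `u⁺` almost everywhere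
because `u ≤ 0` a.e. off `O`. Since `t ↦ max t 0` is monotone and `1`-Lipschitz, `h` lies in
`H^s_0(Ō)` and `⟨u, h⟩_{H^s} ≥ 0`; hence `∫ (u⁺)² = ∫ u h ≤ -⟨u, h⟩_{H^s} ≤ 0`, so `u⁺ = 0`
almost everywhere. -/

open MeasureTheory Filter Topology Metric Set
open scoped ENNReal NNReal RealInnerProductSpace Pointwise

noncomputable section

/-- Euclidean space `ℝ^d`. -/
abbrev Euc (d : ℕ) := EuclideanSpace ℝ (Fin d)

/-- The fractional `H^s` inner product
`⟨u,v⟩_{H^s} = ∫∫ (u x − u y)(v x − v y)/|x−y|^{d+2s} dx dy`. -/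
def fracInner (d : ℕ) (s : ℝ) (u v : Euc d → ℝ) : ℝ :=
  ∫ p : Euc d × Euc d, (u p.1 - u p.2) * (v p.1 - v p.2) / dist p.1 p.2 ^ ((d : ℝ) + 2 * s)

/-- The squared Gagliardo seminorm `|u|²_{H^s}` as an extended nonnegative real. -/
def fracSq (d : ℕ) (s : ℝ) (u : Euc d → ℝ) : ℝ≥0∞ :=
  ∫⁻ p : Euc d × Euc d, ENNReal.ofReal ((u p.1 - u p.2) ^ 2 / dist p.1 p.2 ^ ((d : ℝ) + 2 * s))

/-- `H^s_0(Ω̄)`: functions on `ℝ^d` vanishing outside `Ω` with finite Gagliardo seminorm. -/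
def Hs0 (d : ℕ) (s : ℝ) (Ω : Set (Euc d)) : Set (Euc d → ℝ) :=
  {u | (∀ x, x ∉ Ω → u x = 0) ∧ fracSq d s u < ⊤}

theorem ae_prod_fst_and_snd {α : Type*} [MeasurableSpace α] {μ : Measure α} {p : α → Prop}
    (h : ∀ᵐ x ∂μ, p x) : ∀ᵐ z ∂μ.prod μ, p z.1 ∧ p z.2 :=
  (Measure.quasiMeasurePreserving_fst.ae h).and (Measure.quasiMeasurePreserving_snd.ae h)

theorem ae_nonpos_of_integral_mul_max_zero_nonpos {α : Type*} [MeasurableSpace α]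
    {μ : Measure α} {u : α → ℝ} (hu : MemLp u 2 μ) (h : ∫ x, u x * max (u x) 0 ∂μ ≤ 0) :
    ∀ᵐ x ∂μ, u x ≤ 0 := by
  have hnonneg : 0 ≤ fun x => u x * max (u x) 0 := fun x => by
    rcases le_total (u x) 0 with hx | hx <;> simp [hx, mul_self_nonneg]
  have hint : Integrable (fun x => u x * max (u x) 0) μ := by
    refine hu.integrable_sq.mono'
      (hu.aestronglyMeasurable.mul (hu.aestronglyMeasurable.sup aestronglyMeasurable_const))
      (Eventually.of_forall fun x => ?_)
    rw [Real.norm_of_nonneg (hnonneg x), sq]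
    rcases le_total (u x) 0 with hx | hx <;> simp [hx, mul_self_nonneg]
  have hzero : (fun x => u x * max (u x) 0) =ᵐ[μ] 0 :=
    (integral_eq_zero_iff_of_nonneg hnonneg hint).1 (le_antisymm h (integral_nonneg hnonneg))
  filter_upwards [hzero] with x hx
  by_contra! hpos
  have : 0 < u x * max (u x) 0 := by rw [max_eq_left hpos.le]; positivity
  exact this.ne' hx

section Gagliardo

variable {d : ℕ} {s : ℝ}

theorem fracSq_congr_ae {v w : Euc d → ℝ} (h : v =ᵐ[volume] w) :
    fracSq d s v = fracSq d s w := by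
  refine lintegral_congr_ae ?_
  rw [Measure.volume_eq_prod]
  filter_upwards [ae_prod_fst_and_snd h] with p ⟨h₁, h₂⟩
  rw [h₁, h₂]

theorem fracInner_congr_ae_right {u v w : Euc d → ℝ} (h : v =ᵐ[volume] w) :
    fracInner d s u v = fracInner d s u w := by
  refine integral_congr_ae ?_
  rw [Measure.volume_eq_prod]
  filter_upwards [ae_prod_fst_and_snd h] with p ⟨h₁, h₂⟩
  rw [h₁, h₂]

theorem fracSq_comp_le {φ : ℝ → ℝ} (hφ : LipschitzWith 1 φ) (u : Euc d → ℝ) :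
    fracSq d s (φ ∘ u) ≤ fracSq d s u := by
  refine lintegral_mono fun p => ENNReal.ofReal_le_ofReal ?_
  refine div_le_div_of_nonneg_right (sq_le_sq.2 ?_) (Real.rpow_nonneg dist_nonneg _)
  simpa [Real.dist_eq] using hφ.dist_le_mul (u p.1) (u p.2)

theorem fracInner_comp_nonneg {φ : ℝ → ℝ} (hφ : Monotone φ) (u : Euc d → ℝ) :
    0 ≤ fracInner d s u (φ ∘ u) := by
  refine integral_nonneg fun p => div_nonneg ?_ (Real.rpow_nonneg dist_nonneg _)
  rcases le_total (u p.1) (u p.2) with h | h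
  · exact mul_nonneg_of_nonpos_of_nonpos (sub_nonpos.2 h) (sub_nonpos.2 (hφ h))
  · exact mul_nonneg (sub_nonneg.2 h) (sub_nonneg.2 (hφ h))

end Gagliardo

theorem fractional_weak_maximum_principle_general
    (d : ℕ) (s : ℝ)
    (O : Set (Euc d))
    (u : Euc d → ℝ) (huL2 : MemLp u 2 volume) (huHs : fracSq d s u < ⊤)
    (hsub : ∀ h ∈ Hs0 d s O, (∀ x, 0 ≤ h x) →
      fracInner d s u h ≤ - ∫ x, u x * h x)
    (hout : ∀ᵐ x ∂(volume : Measure (Euc d)), x ∉ O → u x ≤ 0) :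
    ∀ᵐ x ∂(volume : Measure (Euc d)), u x ≤ 0 := by
  set φ : ℝ → ℝ := fun t => max t 0
  have hφ_mono : Monotone φ := fun _ _ hab => max_le_max hab le_rfl
  have hφ_lip : LipschitzWith 1 φ := LipschitzWith.id.max_const 0
  set h : Euc d → ℝ := O.indicator (φ ∘ u)
  have h_ae : h =ᵐ[volume] φ ∘ u := by
    filter_upwards [hout] with x hx
    by_cases hxO : x ∈ O
    · exact indicator_of_mem hxO _
    · simp [h, φ, indicator_of_notMem hxO, hx hxO]
  have hmem : h ∈ Hs0 d s O :=
    ⟨fun x hx => indicator_of_notMem hx _,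
      ((fracSq_congr_ae h_ae).trans_le (fracSq_comp_le hφ_lip u)).trans_lt huHs⟩
  have hinner : 0 ≤ fracInner d s u h :=
    (fracInner_congr_ae_right h_ae).symm ▸ fracInner_comp_nonneg hφ_mono u
  have hh_nonneg : ∀ x, 0 ≤ h x := indicator_nonneg fun x _ => le_max_right _ _
  refine ae_nonpos_of_integral_mul_max_zero_nonpos huL2 ?_
  calc ∫ x, u x * max (u x) 0 = ∫ x, u x * h x :=
        integral_congr_ae (h_ae.mul_left (f₃ := u)).symm
    _ ≤ -fracInner d s u h := le_neg_of_le_neg (hsub h hmem hh_nonneg)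
    _ ≤ 0 := neg_nonpos.2 hinner

/-- weak maximum principle for `(−Δ)^s + Id`. -/
theorem fractional_weak_maximum_principle
    (d : ℕ) (hd : 1 ≤ d) (s : ℝ) (hs : s ∈ Set.Ioo (0 : ℝ) 1)
    (O : Set (Euc d)) (hO : IsOpen O)
    (u : Euc d → ℝ) (huL2 : MemLp u 2 volume) (huHs : fracSq d s u < ⊤)
    (hsub : ∀ h ∈ Hs0 d s O, (∀ x, 0 ≤ h x) →
      fracInner d s u h ≤ - ∫ x, u x * h x)
    (hout : ∀ᵐ x ∂(volume : Measure (Euc d)), x ∉ O → u x ≤ 0) :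
    ∀ᵐ x ∂(volume : Measure (Euc d)), u x ≤ 0 :=
  fractional_weak_maximum_principle_general d s O u huL2 huHs hsub hout
end
end

section
/- Let d ≥ 1, s ∈ (0,1), Ω ⊂ ℝ^d open and bounded, f ∈ H^s_0(Ω̄) ∩ L²(Ω), and C > 0. Then there exists a constant K = K(f, C, |Ω|) such that for every α ∈ (0,1] and every n ∈ L²(Ω) with ‖n‖_{L²} ≤ C α, the unique minimizer u_{α,n} of u ↦ ∫_Ω (u − f − n)² + α |u|²_{H^s} over H^s_0(Ω̄) ∩ L²(Ω) satisfies ‖u_{α,n} − f‖_{L²(Ω)} ≤ K α^{1/2}. -/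
open MeasureTheory Filter Topology Metric Set
open scoped ENNReal NNReal RealInnerProductSpace Pointwise

noncomputable section

/-- `H^s_0(Ω̄) ∩ L²(Ω)` (functions vanishing outside `Ω`). -/
def admSet2 (d : ℕ) (s : ℝ) (Ω : Set (Euc d)) : Set (Euc d → ℝ) :=
  {w | w ∈ Hs0 d s Ω ∧ MemLp w 2 volume}

/-! Testing the minimality of `u` against the competitor `f` gives
`‖u - f - n‖² + α |u|²_{H^s} ≤ ‖n‖² + α |f|²_{H^s}`, hence `‖u - f - n‖² ≤ C² α² + α |f|²_{H^s}
≤ α (C² + |f|²_{H^s})` since `α ≤ 1`. As also `‖n‖ ≤ C α ≤ C √α`, the triangle inequality gives the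
rate with `K = √(C² + |f|²_{H^s}) + C`. -/

section

variable {X : Type*} [MeasurableSpace X] {μ : Measure X}

lemma sq_lpNorm_two_eq_integral {g : X → ℝ} (hg : AEStronglyMeasurable g μ) :
    lpNorm g 2 μ ^ 2 = ∫ x, g x ^ 2 ∂μ := by
  have h := lpNorm_eq_integral_norm_rpow_toReal two_ne_zero ENNReal.ofNat_ne_top hg
  simp only [ENNReal.toReal_ofNat, Real.rpow_two, Real.norm_eq_abs, sq_abs] at h
  rw [h, ← Real.rpow_natCast, ← Real.rpow_mul (integral_nonneg fun x => sq_nonneg _)]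
  norm_num

lemma setIntegral_sq_eq_sq_lpNorm_two {Ω : Set X} {g : X → ℝ} (hg : AEStronglyMeasurable g μ)
    (hΩ : ∀ x ∉ Ω, g x = 0) : ∫ x in Ω, g x ^ 2 ∂μ = lpNorm g 2 μ ^ 2 := by
  rw [sq_lpNorm_two_eq_integral hg]
  exact setIntegral_eq_integral_of_forall_compl_eq_zero fun x hx => by simp [hΩ x hx]

lemma sq_lpNorm_residual_le_of_isMinOn {Ω : Set X} {S : Set (X → ℝ)} {R : (X → ℝ) → ℝ}
    {α : ℝ} (hα : 0 ≤ α) {u f n : X → ℝ} (hu : AEStronglyMeasurable u μ)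
    (hf : AEStronglyMeasurable f μ) (hn : AEStronglyMeasurable n μ)
    (hu0 : ∀ x ∉ Ω, u x = 0) (hf0 : ∀ x ∉ Ω, f x = 0) (hn0 : ∀ x ∉ Ω, n x = 0)
    (hfS : f ∈ S) (hRu : 0 ≤ R u)
    (hmin : IsMinOn (fun w => (∫ x in Ω, (w x - f x - n x) ^ 2 ∂μ) + α * R w) S u) :
    lpNorm (u - f - n) 2 μ ^ 2 ≤ lpNorm n 2 μ ^ 2 + α * R f := by
  have hcmp := isMinOn_iff.1 hmin f hfS
  have hres : ∫ x in Ω, (u x - f x - n x) ^ 2 ∂μ = lpNorm (u - f - n) 2 μ ^ 2 :=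
    setIntegral_sq_eq_sq_lpNorm_two ((hu.sub hf).sub hn)
      fun x hx => by simp [hu0 x hx, hf0 x hx, hn0 x hx]
  have hnoise : ∫ x in Ω, (f x - f x - n x) ^ 2 ∂μ = lpNorm n 2 μ ^ 2 := by
    simp only [sub_self, zero_sub, neg_sq]
    exact setIntegral_sq_eq_sq_lpNorm_two hn hn0
  rw [hres, hnoise] at hcmp
  linarith [mul_nonneg hα hRu]

lemma add_le_mul_sqrt_of_sq_le {a ν α C B : ℝ} (hν : 0 ≤ ν) (hα : 0 < α)
    (hα1 : α ≤ 1) (hνC : ν ≤ C * α) (hsq : a ^ 2 ≤ ν ^ 2 + α * B) :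
    a + ν ≤ (Real.sqrt (C ^ 2 + B) + C) * Real.sqrt α := by
  have hC : 0 ≤ C := nonneg_of_mul_nonneg_left (hν.trans hνC) hα
  have hαsqrt : α ≤ Real.sqrt α := Real.le_sqrt_of_sq_le (by nlinarith)
  have ha : a ≤ Real.sqrt (C ^ 2 + B) * Real.sqrt α := by
    rw [← Real.sqrt_mul' _ hα.le]
    apply Real.le_sqrt_of_sq_le
    nlinarith [mul_le_mul hνC hνC hν (by positivity)]
  linarith [mul_le_mul_of_nonneg_left hαsqrt hC]

end

theorem denoising_L2_rate_general
    (d : ℕ) (s : ℝ)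
    (Ω : Set (Euc d))
    (f : Euc d → ℝ) (hf : f ∈ admSet2 d s Ω)
    (C : ℝ) :
    ∃ K : ℝ, ∀ α ∈ Set.Ioc (0 : ℝ) 1, ∀ n : Euc d → ℝ,
      (∀ x, x ∉ Ω → n x = 0) → MemLp n 2 volume →
      (eLpNorm n 2 volume).toReal ≤ C * α →
      ∀ u ∈ admSet2 d s Ω,
        IsMinOn (fun w => (∫ x in Ω, (w x - f x - n x) ^ 2) + α * (fracSq d s w).toReal)
          (admSet2 d s Ω) u →
        (eLpNorm (u - f) 2 volume).toReal ≤ K * α ^ (1/2 : ℝ) := by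
  refine ⟨Real.sqrt (C ^ 2 + (fracSq d s f).toReal) + C, ?_⟩
  rintro α ⟨hα0, hα1⟩ n hn0 hn hnC u hu hmin
  have hresidual := sq_lpNorm_residual_le_of_isMinOn hα0.le hu.2.aestronglyMeasurable
    hf.2.aestronglyMeasurable hn.aestronglyMeasurable hu.1.1 hf.1.1 hn0 hf ENNReal.toReal_nonneg
    hmin
  rw [toReal_eLpNorm hn.aestronglyMeasurable] at hnC
  rw [toReal_eLpNorm (hu.2.sub hf.2).aestronglyMeasurable, ← Real.sqrt_eq_rpow]
  calc lpNorm (u - f) 2 volume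
      ≤ lpNorm (u - f - n) 2 volume + lpNorm n 2 volume := by
        simpa using lpNorm_add_le ((hu.2.sub hf.2).sub hn) (g := n) one_le_two
    _ ≤ _ := add_le_mul_sqrt_of_sq_le lpNorm_nonneg hα0 hα1 hnC hresidual

/-- `O(√α)` convergence rate in `L²` for fractional denoising. -/
theorem denoising_L2_rate
    (d : ℕ) (hd : 1 ≤ d) (s : ℝ) (hs : s ∈ Set.Ioo (0 : ℝ) 1)
    (Ω : Set (Euc d)) (hΩo : IsOpen Ω) (hΩb : Bornology.IsBounded Ω)
    (f : Euc d → ℝ) (hf : f ∈ admSet2 d s Ω)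
    (C : ℝ) (hC : 0 < C) :
    ∃ K : ℝ, ∀ α ∈ Set.Ioc (0 : ℝ) 1, ∀ n : Euc d → ℝ,
      (∀ x, x ∉ Ω → n x = 0) → MemLp n 2 volume →
      (eLpNorm n 2 volume).toReal ≤ C * α →
      ∀ u ∈ admSet2 d s Ω,
        IsMinOn (fun w => (∫ x in Ω, (w x - f x - n x) ^ 2) + α * (fracSq d s w).toReal)
          (admSet2 d s Ω) u →
        (eLpNorm (u - f) 2 volume).toReal ≤ K * α ^ (1/2 : ℝ) :=
  denoising_L2_rate_general d s Ω f hf C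
end
end
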